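/- Let f be a non-negative submodular function on finite ground set N, let ε ∈ (0,1), k ≥ 1, and let S, OPT ⊆ N be sets with |S \ OPT| = |OPT \ S| ≤ k, both nonempty. If for every u ∈ N \ S and v ∈ S it holds that (1 + ε/k)·f(S) ≥ f((S \ {v}) ∪ {u}), and for every v ∈ S it holds that (1 + ε/k)·f(S) > f(S \ {v}), then f(S) ≥ (f(S ∪ OPT) + f(S ∩ OPT))/(2 + ε). -/

import Mathlib

/-!
Submodularity bounds `f (S ∪ OPT)` by `f S` plus the marginal gains of adding the elements of
`OPT \ S` one at a time to `S`, and `f (S ∩ OPT)` by `f S` plus the marginal losses of deleting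
the elements of `S \ OPT` one at a time. Pair these two sets by a bijection: by submodularity a
gain plus a loss is at most the change caused by the corresponding swap, which local optimality
bounds by `ε / k * f S`. Summing over at most `k` pairs gives
`f (S ∪ OPT) + f (S ∩ OPT) ≤ (2 + ε) * f S`.
-/

open Finset

def Submodular {α : Type*} [DecidableEq α] (f : Finset α → ℝ) : Prop :=
  ∀ S T : Finset α, f (S ∪ T) + f (S ∩ T) ≤ f S + f T

namespace Submodular

variable {α : Type*} [DecidableEq α] {f : Finset α → ℝ}

theorem union_le_add_sum_gain (hf : Submodular f) (S T : Finset α) :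
    f (S ∪ T) ≤ f S + ∑ b ∈ T, (f (insert b S) - f S) := by
  induction T using Finset.induction_on with
  | empty => simp
  | @insert b T hb ih =>
    have hunion : (S ∪ T) ∪ insert b S = S ∪ insert b T := by
      ext x; simp only [mem_union, mem_insert]; tauto
    have hinter : (S ∪ T) ∩ insert b S = S := by
      ext x; simp only [mem_inter, mem_union, mem_insert]
      constructor
      · rintro ⟨hS | hT, rfl | hS'⟩ <;> first | assumption | exact absurd hT hb
      · exact fun hx => ⟨Or.inl hx, Or.inr hx⟩
    have h := hf (S ∪ T) (insert b S)
    rw [hunion, hinter] at h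
    rw [sum_insert hb]
    linarith

theorem sdiff_le_add_sum_loss (hf : Submodular f) (S T : Finset α) :
    f (S \ T) ≤ f S + ∑ a ∈ T, (f (S.erase a) - f S) := by
  induction T using Finset.induction_on with
  | empty => simp
  | @insert a T ha ih =>
    have hunion : (S \ T) ∪ S.erase a = S := by
      ext x; simp only [mem_union, mem_sdiff, mem_erase]
      by_cases hxT : x ∈ T
      · have : x ≠ a := fun h => ha (h ▸ hxT)
        tauto
      · tauto
    have hinter : (S \ T) ∩ S.erase a = S \ insert a T := by
      ext x; simp only [mem_inter, mem_sdiff, mem_erase, mem_insert]; tauto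
    have h := hf (S \ T) (S.erase a)
    rw [hunion, hinter] at h
    rw [sum_insert ha]
    linarith

theorem insert_add_erase_le_swap (hf : Submodular f) {S : Finset α} {u : α} (hu : u ∉ S)
    (v : α) : f (insert u S) + f (S.erase v) ≤ f (insert u (S.erase v)) + f S := by
  have h := hf (insert u (S.erase v)) S
  rwa [insert_union, union_eq_right.mpr (erase_subset v S), insert_inter_of_notMem hu,
    inter_eq_left.mpr (erase_subset v S)] at h

end Submodular

theorem Finset.sum_add_sum_le_card_mul_of_card_eq {α β : Type*} {A : Finset α} {B : Finset β}
    (hcard : #A = #B) (l : α → ℝ) (g : β → ℝ) (c : ℝ)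
    (hpair : ∀ a ∈ A, ∀ b ∈ B, l a + g b ≤ c) :
    ∑ a ∈ A, l a + ∑ b ∈ B, g b ≤ #A * c := by
  let e : A ≃ B := equivOfCardEq hcard
  calc ∑ a ∈ A, l a + ∑ b ∈ B, g b
      = ∑ a : A, (l a + g (e a)) := by
        rw [sum_add_distrib, ← sum_coe_sort A l, ← sum_coe_sort B g,
          Equiv.sum_comp e (fun b : B => g b)]
    _ ≤ ∑ _a : A, c := sum_le_sum fun a _ => hpair a a.2 (e a) (e a).2
    _ = #A * c := by simp

theorem stmt_5_general {N : Type*} [DecidableEq N] (f : Finset N → ℝ)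
    (hsub : ∀ S T : Finset N, f (S ∪ T) + f (S ∩ T) ≤ f S + f T)
    (hnonneg : ∀ S : Finset N, 0 ≤ f S)
    (ε : ℝ) (hε : 0 < ε ∧ ε < 1) (k : ℕ)
    (S OPT : Finset N)
    (hcardeq : (S \ OPT).card = (OPT \ S).card)
    (hcardle : (OPT \ S).card ≤ k)
    (hswap : ∀ u : N, u ∉ S → ∀ v ∈ S, (1 + ε / k) * f S ≥ f (insert u (S.erase v))) :
    f S ≥ (f (S ∪ OPT) + f (S ∩ OPT)) / (2 + ε) := by
  have hpair : ∀ a ∈ S \ OPT, ∀ b ∈ OPT \ S,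
      (f (S.erase a) - f S) + (f (insert b S) - f S) ≤ ε / k * f S := by
    intro a ha b hb
    have := Submodular.insert_add_erase_le_swap hsub (mem_sdiff.mp hb).2 a
    linarith [hswap b (mem_sdiff.mp hb).2 a (mem_sdiff.mp ha).1]
  have hpairs := sum_add_sum_le_card_mul_of_card_eq hcardeq _ _ _ hpair
  have hratio : ((S \ OPT).card : ℝ) / k ≤ 1 :=
    div_le_one_of_le₀ (by exact_mod_cast hcardeq ▸ hcardle) k.cast_nonneg
  have hpairs_le : ((S \ OPT).card : ℝ) * (ε / k * f S) ≤ ε * f S := calc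
    _ = ((S \ OPT).card / k : ℝ) * (ε * f S) := by ring
    _ ≤ 1 * (ε * f S) := by gcongr; exact mul_nonneg hε.1.le (hnonneg S)
    _ = ε * f S := one_mul _
  have hunion := Submodular.union_le_add_sum_gain hsub S (OPT \ S)
  have hinter := Submodular.sdiff_le_add_sum_loss hsub S (S \ OPT)
  rw [union_sdiff_self_eq_union] at hunion
  rw [sdiff_sdiff_self_left] at hinter
  rw [ge_iff_le, div_le_iff₀ (by linarith [hε.1])]
  linarith

theorem stmt_5 {N : Type*} [Fintype N] [DecidableEq N] (f : Finset N → ℝ)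
    (hsub : ∀ S T : Finset N, f (S ∪ T) + f (S ∩ T) ≤ f S + f T)
    (hnonneg : ∀ S : Finset N, 0 ≤ f S)
    (ε : ℝ) (hε : 0 < ε ∧ ε < 1) (k : ℕ) (hk : 1 ≤ k)
    (S OPT : Finset N)
    (hcardeq : (S \ OPT).card = (OPT \ S).card)
    (hcardle : (OPT \ S).card ≤ k)
    (hne1 : (S \ OPT).Nonempty) (hne2 : (OPT \ S).Nonempty)
    (hswap : ∀ u : N, u ∉ S → ∀ v ∈ S, (1 + ε / k) * f S ≥ f (insert u (S.erase v)))
    (hdel : ∀ v ∈ S, (1 + ε / k) * f S > f (S.erase v)) :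
    f S ≥ (f (S ∪ OPT) + f (S ∩ OPT)) / (2 + ε) :=
  stmt_5_general f hsub hnonneg ε hε k S OPT hcardeq hcardle hswap
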